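/- Restricting to one-directional transfers does not change the per-slot optimum: for h_1, h_2 > 0, σ_1², σ_2² > 0, α_1, α_2 ∈ [0,1], and π_1, π_2 ≥ 0, the supremum of (1/2)·log(1 + h_1(π_1 − δ_1 + α_2 δ_2)/σ_2²) + (1/2)·log(1 + h_2(π_2 − δ_2 + α_1 δ_1)/σ_1²) over δ_1 ∈ [0, π_1], δ_2 ∈ [0, π_2] equals its supremum over the same box with the additional constraint δ_1 · δ_2 = 0. -/
import Mathlib


/-- Restricting the per-slot energy transfer optimization of the
two-way channel to one-directional transfers does not change the optimum. -/
theorem stmt_7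
    (h1 h2 s1 s2 a1 a2 π1 π2 : ℝ)
    (hh1 : 0 < h1) (hh2 : 0 < h2) (hs1 : 0 < s1) (hs2 : 0 < s2)
    (ha1 : a1 ∈ Set.Icc (0:ℝ) 1) (ha2 : a2 ∈ Set.Icc (0:ℝ) 1)
    (hπ1 : 0 ≤ π1) (hπ2 : 0 ≤ π2) :
    sSup {r : ℝ | ∃ d1 d2 : ℝ, 0 ≤ d1 ∧ d1 ≤ π1 ∧ 0 ≤ d2 ∧ d2 ≤ π2 ∧
      r = 1/2 * Real.log (1 + h1 * (π1 - d1 + a2 * d2) / s2)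
        + 1/2 * Real.log (1 + h2 * (π2 - d2 + a1 * d1) / s1)}
    = sSup {r : ℝ | ∃ d1 d2 : ℝ, 0 ≤ d1 ∧ d1 ≤ π1 ∧ 0 ≤ d2 ∧ d2 ≤ π2 ∧
      d1 * d2 = 0 ∧
      r = 1/2 * Real.log (1 + h1 * (π1 - d1 + a2 * d2) / s2)
        + 1/2 * Real.log (1 + h2 * (π2 - d2 + a1 * d1) / s1)} := by
  obtain ⟨ha1l, ha1r⟩ := ha1
  obtain ⟨ha2l, ha2r⟩ := ha2
  have mono : ∀ (c σ x y : ℝ), 0 < c → 0 < σ → 0 ≤ x → x ≤ y →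
      Real.log (1 + c * x / σ) ≤ Real.log (1 + c * y / σ) := by
    intro c σ x y hc hσ hx hxy
    have h0 : (0:ℝ) ≤ c * x / σ := by positivity
    have h0' : (0:ℝ) < 1 + c * x / σ := by linarith
    have h1 : c * x / σ ≤ c * y / σ := by gcongr
    exact Real.log_le_log h0' (by linarith)
  set A := {r : ℝ | ∃ d1 d2 : ℝ, 0 ≤ d1 ∧ d1 ≤ π1 ∧ 0 ≤ d2 ∧ d2 ≤ π2 ∧
      r = 1/2 * Real.log (1 + h1 * (π1 - d1 + a2 * d2) / s2)
        + 1/2 * Real.log (1 + h2 * (π2 - d2 + a1 * d1) / s1)} with hA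
  set B := {r : ℝ | ∃ d1 d2 : ℝ, 0 ≤ d1 ∧ d1 ≤ π1 ∧ 0 ≤ d2 ∧ d2 ≤ π2 ∧
      d1 * d2 = 0 ∧
      r = 1/2 * Real.log (1 + h1 * (π1 - d1 + a2 * d2) / s2)
        + 1/2 * Real.log (1 + h2 * (π2 - d2 + a1 * d1) / s1)} with hB
  have hBA : B ⊆ A := by
    rintro r ⟨d1, d2, u1, u2, u3, u4, _, u6⟩
    exact ⟨d1, d2, u1, u2, u3, u4, u6⟩
  have hBne : B.Nonempty :=
    ⟨_, 0, 0, le_refl _, hπ1, le_refl _, hπ2, by ring, rfl⟩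
  have hAne : A.Nonempty := hBne.mono hBA
  have hbddA : BddAbove A := by
    refine ⟨1/2 * Real.log (1 + h1 * (π1 + a2 * π2) / s2)
        + 1/2 * Real.log (1 + h2 * (π2 + a1 * π1) / s1), ?_⟩
    rintro r ⟨d1, d2, hd1, hd1', hd2, hd2', rfl⟩
    have l1 := mono h1 s2 (π1 - d1 + a2 * d2) (π1 + a2 * π2) hh1 hs2
      (by nlinarith) (by nlinarith)
    have l2 := mono h2 s1 (π2 - d2 + a1 * d1) (π2 + a1 * π1) hh2 hs1
      (by nlinarith) (by nlinarith)
    linarith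
  have hbddB : BddAbove B := hbddA.mono hBA
  apply le_antisymm
  · apply csSup_le hAne
    rintro r ⟨d1, d2, hd1, hd1', hd2, hd2', rfl⟩
    set t := min d1 d2 with ht
    have ht0 : 0 ≤ t := le_min hd1 hd2
    have htd1 : t ≤ d1 := min_le_left _ _
    have htd2 : t ≤ d2 := min_le_right _ _
    have hmem : (1/2 * Real.log (1 + h1 * (π1 - (d1 - t) + a2 * (d2 - t)) / s2)
        + 1/2 * Real.log (1 + h2 * (π2 - (d2 - t) + a1 * (d1 - t)) / s1)) ∈ B := by
      refine ⟨d1 - t, d2 - t, by linarith, by linarith, by linarith, by linarith, ?_, rfl⟩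
      rcases min_cases d1 d2 with ⟨h, _⟩ | ⟨h, _⟩
      · rw [ht, h]; ring
      · rw [ht, h]; ring
    have l1 := mono h1 s2 (π1 - d1 + a2 * d2) (π1 - (d1 - t) + a2 * (d2 - t)) hh1 hs2
      (by nlinarith) (by nlinarith)
    have l2 := mono h2 s1 (π2 - d2 + a1 * d1) (π2 - (d2 - t) + a1 * (d1 - t)) hh2 hs1
      (by nlinarith) (by nlinarith)
    calc 1/2 * Real.log (1 + h1 * (π1 - d1 + a2 * d2) / s2)
        + 1/2 * Real.log (1 + h2 * (π2 - d2 + a1 * d1) / s1)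
        ≤ 1/2 * Real.log (1 + h1 * (π1 - (d1 - t) + a2 * (d2 - t)) / s2)
        + 1/2 * Real.log (1 + h2 * (π2 - (d2 - t) + a1 * (d1 - t)) / s1) := by linarith
      _ ≤ sSup B := le_csSup hbddB hmem
  · exact csSup_le_csSup hbddA hBne hBA
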